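/- Let D ∈ ℂ^{m×N} (with unit-norm columns, coherence μ > 0) and let x ∈ ℂ^N satisfy ‖x‖₀ < (1 + 1/μ)/2. Then x is the unique minimizer of ‖z‖₀ subject to Dz = Dx. -/

import Mathlib

open Matrix

/-- The coherence of a dictionary: the maximum absolute inner product between distinct
columns. -/
noncomputable def coherence {m n : Type*} [Fintype m] [Fintype n] (D : Matrix m n ℂ) : ℝ :=
  sSup {r | ∃ i j, i ≠ j ∧ r = ‖(Dᴴ * D) i j‖}

/-!
If `D x = D z` with `x ≠ z`, then `w = z - x` is a nonzero vector in the kernel of the Gram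
matrix `G = Dᴴ D`, whose diagonal is `1` and whose off-diagonal entries are bounded by `μ`.
At a coordinate `i` where `|w i|` is maximal, row `i` of `G w = 0` gives
`|w i| ≤ (|supp w| - 1) μ |w i|`, so `|supp w| ≥ 1 + 1/μ`. Since `supp w ⊆ supp x ∪ supp z`
and `|supp x| < (1 + 1/μ)/2`, the support of `z` must be strictly larger than that of `x`.
-/

section KernelSupport

variable {ι 𝕜 : Type*} [Fintype ι] [DecidableEq ι] [NormedDivisionRing 𝕜]
  {G : Matrix ι ι 𝕜} {w : ι → 𝕜} {s : Finset ι}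

lemma norm_le_sum_norm_mul_of_mulVec_eq_zero {i : ι} (hdiag : G i i = 1)
    (hker : G *ᵥ w = 0) (hsupp : ∀ j ∉ s, w j = 0) :
    ‖w i‖ ≤ ∑ j ∈ s.erase i, ‖G i j‖ * ‖w j‖ := by
  have hrow : w i = -∑ j ∈ Finset.univ.erase i, G i j * w j := by
    have h := Finset.sum_erase_add Finset.univ (fun j => G i j * w j) (Finset.mem_univ i)
    rw [hdiag, one_mul] at h
    exact eq_neg_of_add_eq_zero_right (h.trans (congrFun hker i))
  calc ‖w i‖ ≤ ∑ j ∈ Finset.univ.erase i, ‖G i j‖ * ‖w j‖ := by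
        rw [hrow, norm_neg]
        exact (norm_sum_le _ _).trans_eq (Finset.sum_congr rfl fun j _ => norm_mul _ _)
    _ = ∑ j ∈ s.erase i, ‖G i j‖ * ‖w j‖ := by
        refine (Finset.sum_subset (Finset.erase_subset_erase i s.subset_univ) ?_).symm
        intro j hj hjs
        rw [hsupp j fun h => hjs (Finset.mem_erase.2 ⟨Finset.ne_of_mem_erase hj, h⟩),
          norm_zero, mul_zero]

theorem one_add_one_div_le_card_of_mulVec_eq_zero {μ : ℝ} (hdiag : ∀ i, G i i = 1)
    (hoff : ∀ i j, i ≠ j → ‖G i j‖ ≤ μ) (hw : w ≠ 0) (hker : G *ᵥ w = 0)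
    (hsupp : ∀ j ∉ s, w j = 0) :
    1 + 1 / μ ≤ s.card := by
  obtain ⟨j, hj⟩ := Function.ne_iff.mp hw
  obtain ⟨i, -, hmax⟩ := Finset.univ.exists_max_image (‖w ·‖) ⟨j, Finset.mem_univ j⟩
  have hwi : 0 < ‖w i‖ := (norm_pos_iff.2 hj).trans_le (hmax j (Finset.mem_univ j))
  have his : i ∈ s := by_contra fun h => norm_pos_iff.1 hwi (hsupp i h)
  have hcard : (1 : ℝ) ≤ s.card := by exact_mod_cast Finset.card_pos.2 ⟨i, his⟩
  have hbound : 1 * ‖w i‖ ≤ ((s.card - 1) * μ) * ‖w i‖ :=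
    calc 1 * ‖w i‖ ≤ ∑ j ∈ s.erase i, ‖G i j‖ * ‖w j‖ :=
          (one_mul _).trans_le (norm_le_sum_norm_mul_of_mulVec_eq_zero (hdiag i) hker hsupp)
      _ ≤ ∑ j ∈ s.erase i, μ * ‖w i‖ := by
          refine Finset.sum_le_sum fun j hj => ?_
          have hij := hoff i j (Finset.ne_of_mem_erase hj).symm
          exact mul_le_mul hij (hmax j (Finset.mem_univ j)) (norm_nonneg _)
            ((norm_nonneg _).trans hij)
      _ = ((s.card - 1) * μ) * ‖w i‖ := by
          rw [Finset.sum_const, Finset.card_erase_of_mem his, nsmul_eq_mul,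
            Nat.cast_pred (Finset.card_pos.2 ⟨i, his⟩)]
          ring
  have h1 : 1 ≤ (s.card - 1) * μ := le_of_mul_le_mul_right hbound hwi
  have hμ : 0 < μ := pos_of_mul_pos_right (one_pos.trans_le h1) (sub_nonneg.2 hcard)
  have : 1 / μ ≤ s.card - 1 := (div_le_iff₀ hμ).2 h1
  linarith

end KernelSupport

lemma conjTranspose_mul_self_apply_self {m n : Type*} [Fintype m] (D : Matrix m n ℂ) (j : n) :
    (Dᴴ * D) j j = ((∑ i, ‖D i j‖ ^ 2 : ℝ) : ℂ) := by
  simp only [mul_apply, conjTranspose_apply, RCLike.star_def, Complex.conj_mul',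
    Complex.ofReal_sum, Complex.ofReal_pow]

lemma norm_conjTranspose_mul_self_apply_le_coherence {m n : Type*} [Fintype m] [Fintype n]
    (D : Matrix m n ℂ) {i j : n} (hij : i ≠ j) : ‖(Dᴴ * D) i j‖ ≤ coherence D := by
  refine le_csSup ?_ ⟨i, j, hij, rfl⟩
  refine ((Set.finite_range fun p : n × n => ‖(Dᴴ * D) p.1 p.2‖).subset ?_).bddAbove
  rintro r ⟨a, b, -, rfl⟩
  exact ⟨(a, b), rfl⟩

theorem l0_unique_coherence_threshold_general {m N : ℕ} (D : Matrix (Fin m) (Fin N) ℂ)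
    (hunit : ∀ j, ∑ i, ‖D i j‖ ^ 2 = 1) (μ : ℝ) (hμ : coherence D = μ)
    (x : Fin N → ℂ) (T : Finset (Fin N)) (hT : ∀ j, j ∈ T ↔ x j ≠ 0)
    (hcard : (T.card : ℝ) < (1 + 1 / μ) / 2) :
    ∀ z : Fin N → ℂ, z ≠ x → D.mulVec z = D.mulVec x →
      ∀ Tz : Finset (Fin N), (∀ j, j ∈ Tz ↔ z j ≠ 0) → T.card < Tz.card := by
  intro z hzx hDz Tz hTz
  have hker : (Dᴴ * D) *ᵥ (z - x) = 0 := by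
    rw [← mulVec_mulVec, mulVec_sub, hDz, sub_self, mulVec_zero]
  have hsupp : ∀ j ∉ T ∪ Tz, (z - x) j = 0 := by
    intro j hj
    rw [Finset.mem_union, hT, hTz, not_or, not_not, not_not] at hj
    simp [hj.1, hj.2]
  have hspark : 1 + 1 / μ ≤ (T ∪ Tz).card :=
    one_add_one_div_le_card_of_mulVec_eq_zero
      (fun j => by rw [conjTranspose_mul_self_apply_self, hunit, Complex.ofReal_one])
      (fun i j hij => hμ ▸ norm_conjTranspose_mul_self_apply_le_coherence D hij)
      (sub_ne_zero.2 hzx) hker hsupp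
  have hunion : ((T ∪ Tz).card : ℝ) ≤ T.card + Tz.card := by
    exact_mod_cast Finset.card_union_le T Tz
  have : (T.card : ℝ) < Tz.card := by linarith
  exact_mod_cast this

/-- The classical deterministic sparsity threshold: if `‖x‖₀ < (1 + 1/μ)/2` where `μ > 0` is
the coherence of the unit-norm dictionary `D`, then `x` is the unique minimizer of `‖z‖₀`
subject to `Dz = Dx`. -/
theorem l0_unique_coherence_threshold {m N : ℕ} (D : Matrix (Fin m) (Fin N) ℂ)
    (hunit : ∀ j, ∑ i, ‖D i j‖ ^ 2 = 1) (μ : ℝ) (hμpos : 0 < μ) (hμ : coherence D = μ)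
    (x : Fin N → ℂ) (T : Finset (Fin N)) (hT : ∀ j, j ∈ T ↔ x j ≠ 0)
    (hcard : (T.card : ℝ) < (1 + 1 / μ) / 2) :
    ∀ z : Fin N → ℂ, z ≠ x → D.mulVec z = D.mulVec x →
      ∀ Tz : Finset (Fin N), (∀ j, j ∈ Tz ↔ z j ≠ 0) → T.card < Tz.card :=
  l0_unique_coherence_threshold_general D hunit μ hμ x T hT hcard
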